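/- Let n ≥ 1, X ∈ ℝ^{n×n}, δ, γ > 0, and let Θ* = α*𝟙𝟙ᵀ + L* + S* and Θ̂ = α̂𝟙𝟙ᵀ + L̂ + Ŝ with P*_{ij} = exp(Θ*_{ij})/(1+exp(Θ*_{ij})). Write Δ^α = α̂−α*, Δ^L = L̂−L*, Δ^S = Ŝ−S*, Δ^Θ = Θ̂−Θ*. Assume: (i) the basic inequality h(Θ̂) + δ‖L̂‖_* + γ‖Ŝ‖_1 ≤ h(Θ*) + δ‖L*‖_* + γ‖S*‖_1; (ii) the convexity bound h(Θ̂) − h(Θ*) ≥ −(1/n)⟨X − P*, Δ^Θ⟩; (iii) δ ≥ 2‖(1/n)(X − P*)‖_op and γ ≥ 2‖(1/n)(X − P*)‖_∞; (iv) Δ^L = Δ^L_A + Δ^L_B is a decomposition satisfying Q(L*,S*) − Q(L̂,Ŝ) ≤ Q(Δ^L_A, Δ^S_M) − Q(Δ^L_B, Δ^S_{M^c}) + 2Σ_{j=k+1}^{n} σ_j(L*) + 2(γ/δ)‖S*_{M^c}‖_1, for an index set M and some k ∈ {1,…,n}. Then Q(Δ^L_B, Δ^S_{M^c}) ≤ ‖Δ^α𝟙𝟙ᵀ‖_F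 + 3·Q(Δ^L_A, Δ^S_M) + 4·Σ_{j=k+1}^{n} σ_j(L*) + 4(γ/δ)‖S*_{M^c}‖_1. -/

import Mathlib

open Matrix BigOperators Finset

noncomputable section

namespace CitNet

variable {n : ℕ}

/-- Frobenius norm of a real matrix. -/
def frob (A : Matrix (Fin n) (Fin n) ℝ) : ℝ :=
  Real.sqrt (∑ i, ∑ j, (A i j) ^ 2)

/-- Elementwise ℓ1 norm. -/
def l1 (A : Matrix (Fin n) (Fin n) ℝ) : ℝ :=
  ∑ i, ∑ j, |A i j|

/-- Elementwise sup norm. -/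
def supNorm (A : Matrix (Fin n) (Fin n) ℝ) : ℝ :=
  ⨆ i, ⨆ j, |A i j|

/-- Trace inner product. -/
def tinner (A B : Matrix (Fin n) (Fin n) ℝ) : ℝ :=
  Matrix.trace (Aᵀ * B)

/-- The matrix square root of a PSD matrix, as `Matrix.PosSemidef.sqrt` was defined in older Mathlib. -/
def psdSqrt {m : Type*} [Fintype m] [DecidableEq m] {A : Matrix m m ℝ} (hA : A.PosSemidef) :
    Matrix m m ℝ :=
  hA.1.eigenvectorUnitary.1 * diagonal ((↑) ∘ (√·) ∘ hA.1.eigenvalues) *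
    (star hA.1.eigenvectorUnitary : Matrix m m ℝ)

/-- `Aᵀ * A` is Hermitian (removed from Mathlib; restated here). -/
theorem Matrix.isHermitian_transpose_mul_self (A : Matrix (Fin n) (Fin n) ℝ) :
    (Aᵀ * A).IsHermitian := by
  have h : Aᴴ = Aᵀ := by
    ext i j
    simp
  have h2 := Matrix.isHermitian_conjTranspose_mul_self A
  rwa [h] at h2

/-- Nuclear norm: trace of the PSD square root of AᴴA. -/
def nuclearNorm (A : Matrix (Fin n) (Fin n) ℝ) : ℝ :=
  (psdSqrt (Matrix.posSemidef_conjTranspose_mul_self A)).trace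

/-- Singular values in decreasing order: `svDesc A j` is σ_{j+1}(A). -/
def svDesc (A : Matrix (Fin n) (Fin n) ℝ) : Fin n → ℝ := fun j =>
  Real.sqrt ((Matrix.isHermitian_transpose_mul_self A).eigenvalues
    (Tuple.sort (Matrix.isHermitian_transpose_mul_self A).eigenvalues j.rev))

/-- Operator norm: largest singular value. -/
def opNorm (A : Matrix (Fin n) (Fin n) ℝ) : ℝ :=
  ⨆ j, svDesc A j

/-- The all-ones matrix 𝟙𝟙ᵀ. -/
def onesMat : Matrix (Fin n) (Fin n) ℝ :=
  Matrix.of fun _ _ => (1 : ℝ)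

/-- The centering matrix J = I − (1/n)𝟙𝟙ᵀ. -/
def Jmat (n : ℕ) : Matrix (Fin n) (Fin n) ℝ :=
  1 - (n : ℝ)⁻¹ • onesMat

/-- Restriction of a matrix to an index set. -/
def restrict (A : Matrix (Fin n) (Fin n) ℝ) (Ω : Finset (Fin n × Fin n)) :
    Matrix (Fin n) (Fin n) ℝ :=
  Matrix.of fun i j => if (i, j) ∈ Ω then A i j else 0

/-- The logistic (sigmoid) matrix P(Θ). -/
def logis (Θ : Matrix (Fin n) (Fin n) ℝ) : Matrix (Fin n) (Fin n) ℝ :=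
  Matrix.of fun i j => Real.exp (Θ i j) / (1 + Real.exp (Θ i j))

/-- Negative log-likelihood function h. -/
def hfun (X Θ : Matrix (Fin n) (Fin n) ℝ) : ℝ :=
  -(1 / (n : ℝ)) * ∑ i, ∑ j, (X i j * Θ i j - Real.log (1 + Real.exp (Θ i j)))

/-!
Split `Θ̂ - Θ*` into the five pieces `Δ^α 𝟙𝟙ᵀ`, `Δ^L_A`, `Δ^L_B`, `Δ^S_M`, `Δ^S_{Mᶜ}` and pair
`(1/n)(X - P*)` with each of them through the dualities `⟨A, B⟩ ≤ ‖A‖_op ‖B‖_*`,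
`⟨A, B⟩ ≤ ‖A‖_∞ ‖B‖₁` and, for the rank-one piece, `⟨A, B⟩ ≤ ‖A‖_op ‖B‖_F`. With (i)–(iii) this
gives `Q(L̂, Ŝ) - Q(L*, S*) ≤ (‖Δ^α 𝟙𝟙ᵀ‖_F + Q(Δ^L_A, Δ^S_M) + Q(Δ^L_B, Δ^S_{Mᶜ})) / 2`, and adding
(iv) leaves an inequality that is linear in `Q(Δ^L_B, Δ^S_{Mᶜ})`.
-/

lemma tinner_eq_sum (A B : Matrix (Fin n) (Fin n) ℝ) :
    tinner A B = ∑ i, ∑ j, A i j * B i j := by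
  simp only [tinner, Matrix.trace, Matrix.diag, Matrix.mul_apply, Matrix.transpose_apply]
  rw [Finset.sum_comm]

lemma tinner_add_right (A B C : Matrix (Fin n) (Fin n) ℝ) :
    tinner A (B + C) = tinner A B + tinner A C := by
  simp only [tinner, Matrix.mul_add, Matrix.trace_add]

lemma tinner_smul_left (c : ℝ) (A B : Matrix (Fin n) (Fin n) ℝ) :
    tinner (c • A) B = c * tinner A B := by
  simp only [tinner, Matrix.transpose_smul, Matrix.smul_mul, Matrix.trace_smul, smul_eq_mul]

lemma nuclearNorm_eq_sum_sqrt_eigenvalues (B : Matrix (Fin n) (Fin n) ℝ) :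
    nuclearNorm B = ∑ i, √((Matrix.isHermitian_transpose_mul_self B).eigenvalues i) := by
  rw [nuclearNorm, psdSqrt, Matrix.trace_mul_cycle, Unitary.coe_star_mul_self, Matrix.one_mul,
    Matrix.trace_diagonal]
  rfl

lemma nuclearNorm_nonneg (B : Matrix (Fin n) (Fin n) ℝ) : 0 ≤ nuclearNorm B := by
  rw [nuclearNorm_eq_sum_sqrt_eigenvalues]
  exact Finset.sum_nonneg fun i _ => Real.sqrt_nonneg _

lemma l1_nonneg (B : Matrix (Fin n) (Fin n) ℝ) : 0 ≤ l1 B :=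
  Finset.sum_nonneg fun _ _ => Finset.sum_nonneg fun _ _ => abs_nonneg _

lemma opNorm_nonneg (A : Matrix (Fin n) (Fin n) ℝ) : 0 ≤ opNorm A :=
  Real.iSup_nonneg fun _ => Real.sqrt_nonneg _

lemma sqrt_eigenvalues_le_opNorm (A : Matrix (Fin n) (Fin n) ℝ) (i : Fin n) :
    √((Matrix.isHermitian_transpose_mul_self A).eigenvalues i) ≤ opNorm A := by
  set f := (Matrix.isHermitian_transpose_mul_self A).eigenvalues
  have hsv : svDesc A ((Tuple.sort f).symm i).rev = √(f i) := by
    simp only [svDesc, Fin.rev_rev, Equiv.apply_symm_apply, f]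
  exact hsv ▸ le_ciSup (Set.finite_range _).bddAbove _

lemma eigenvalues_le_opNorm_sq (A : Matrix (Fin n) (Fin n) ℝ) (i : Fin n) :
    (Matrix.isHermitian_transpose_mul_self A).eigenvalues i ≤ opNorm A ^ 2 := by
  have h0 := Matrix.eigenvalues_conjTranspose_mul_self_nonneg A i
  calc _ = √((Matrix.isHermitian_transpose_mul_self A).eigenvalues i) ^ 2 := (Real.sq_sqrt h0).symm
    _ ≤ opNorm A ^ 2 := pow_le_pow_left₀ (Real.sqrt_nonneg _) (sqrt_eigenvalues_le_opNorm A i) 2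

lemma dotProduct_le_sqrt_mul_sqrt (x y : Fin n → ℝ) : x ⬝ᵥ y ≤ √(x ⬝ᵥ x) * √(y ⬝ᵥ y) := by
  simpa only [dotProduct, pow_two] using Real.sum_mul_le_sqrt_mul_sqrt Finset.univ x y

lemma mulVec_dotProduct_mulVec (A B : Matrix (Fin n) (Fin n) ℝ) (x y : Fin n → ℝ) :
    (A *ᵥ x) ⬝ᵥ (B *ᵥ y) = x ⬝ᵥ ((Aᵀ * B) *ᵥ y) := by
  rw [← Matrix.mulVec_mulVec, Matrix.dotProduct_mulVec x Aᵀ, Matrix.vecMul_transpose]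

lemma eigenvectorUnitary_mul_transpose {H : Matrix (Fin n) (Fin n) ℝ} (hH : H.IsHermitian) :
    (hH.eigenvectorUnitary : Matrix (Fin n) (Fin n) ℝ) *
      (hH.eigenvectorUnitary : Matrix (Fin n) (Fin n) ℝ)ᵀ = 1 :=
  Unitary.coe_mul_star_self hH.eigenvectorUnitary

lemma dotProduct_mulVec_le_of_eigenvalues_le {H : Matrix (Fin n) (Fin n) ℝ} (hH : H.IsHermitian)
    {c : ℝ} (hc : ∀ i, hH.eigenvalues i ≤ c) (v : Fin n → ℝ) :
    v ⬝ᵥ (H *ᵥ v) ≤ c * (v ⬝ᵥ v) := by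
  set U : Matrix (Fin n) (Fin n) ℝ := (hH.eigenvectorUnitary : Matrix (Fin n) (Fin n) ℝ)
  set w := Uᵀ *ᵥ v
  have hspec : H = U * Matrix.diagonal hH.eigenvalues * Uᵀ := by
    conv_lhs => rw [hH.spectral_theorem, Unitary.conjStarAlgAut_apply]
    rfl
  have hww : w ⬝ᵥ w = v ⬝ᵥ v := by
    rw [mulVec_dotProduct_mulVec, Matrix.transpose_transpose,
      eigenvectorUnitary_mul_transpose, Matrix.one_mulVec]
  calc v ⬝ᵥ (H *ᵥ v) = w ⬝ᵥ (Matrix.diagonal hH.eigenvalues *ᵥ w) := by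
        conv_lhs => rw [hspec]
        rw [← Matrix.mulVec_mulVec, ← Matrix.mulVec_mulVec, Matrix.dotProduct_mulVec,
          ← Matrix.mulVec_transpose]
    _ = ∑ i, hH.eigenvalues i * w i ^ 2 := by
        simp only [dotProduct, Matrix.mulVec_diagonal]
        exact Finset.sum_congr rfl fun i _ => by ring
    _ ≤ ∑ i, c * w i ^ 2 :=
        Finset.sum_le_sum fun i _ => mul_le_mul_of_nonneg_right (hc i) (sq_nonneg _)
    _ = c * (v ⬝ᵥ v) := by
        rw [← hww, dotProduct, Finset.mul_sum]
        simp only [pow_two]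

lemma sqrt_dotProduct_mulVec_le (A : Matrix (Fin n) (Fin n) ℝ) (v : Fin n → ℝ) :
    √((A *ᵥ v) ⬝ᵥ (A *ᵥ v)) ≤ opNorm A * √(v ⬝ᵥ v) := by
  have h := dotProduct_mulVec_le_of_eigenvalues_le (Matrix.isHermitian_transpose_mul_self A)
    (eigenvalues_le_opNorm_sq A) v
  rw [← mulVec_dotProduct_mulVec] at h
  calc √((A *ᵥ v) ⬝ᵥ (A *ᵥ v)) ≤ √(opNorm A ^ 2 * (v ⬝ᵥ v)) := Real.sqrt_le_sqrt h
    _ = opNorm A * √(v ⬝ᵥ v) := by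
        rw [Real.sqrt_mul (sq_nonneg _), Real.sqrt_sq (opNorm_nonneg A)]

lemma tinner_eq_sum_mulVec_dotProduct_mulVec {U : Matrix (Fin n) (Fin n) ℝ} (hU : U * Uᵀ = 1)
    (A B : Matrix (Fin n) (Fin n) ℝ) :
    tinner A B = ∑ i, (A *ᵥ Uᵀ i) ⬝ᵥ (B *ᵥ Uᵀ i) := by
  have hconj : tinner A B = (Uᵀ * (Aᵀ * B) * U).trace := by
    rw [Matrix.trace_mul_cycle, hU, Matrix.one_mul, tinner]
  rw [hconj, Matrix.trace]
  refine Finset.sum_congr rfl fun i _ => ?_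
  rw [mulVec_dotProduct_mulVec]
  generalize Aᵀ * B = C
  simp only [Matrix.diag_apply, Matrix.mul_apply, Matrix.mulVec, dotProduct, Matrix.transpose_apply,
    Finset.mul_sum, mul_assoc]

lemma tinner_le_opNorm_mul_nuclearNorm (A B : Matrix (Fin n) (Fin n) ℝ) :
    tinner A B ≤ opNorm A * nuclearNorm B := by
  set hH := Matrix.isHermitian_transpose_mul_self B
  set U : Matrix (Fin n) (Fin n) ℝ := (hH.eigenvectorUnitary : Matrix (Fin n) (Fin n) ℝ)
  have hunit : ∀ i, Uᵀ i ⬝ᵥ Uᵀ i = 1 := by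
    intro i
    have h := congrFun (congrFun (Unitary.coe_star_mul_self hH.eigenvectorUnitary) i) i
    simpa only [Matrix.mul_apply, dotProduct, Matrix.transpose_apply, Matrix.star_apply,
      star_trivial, Matrix.one_apply_eq] using h
  have hB : ∀ i, (B *ᵥ Uᵀ i) ⬝ᵥ (B *ᵥ Uᵀ i) = hH.eigenvalues i := by
    intro i
    rw [mulVec_dotProduct_mulVec, hH.eigenvectorUnitary_transpose_apply,
      hH.mulVec_eigenvectorBasis, dotProduct_smul, ← hH.eigenvectorUnitary_transpose_apply, hunit,
      smul_eq_mul, mul_one]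
  rw [tinner_eq_sum_mulVec_dotProduct_mulVec (eigenvectorUnitary_mul_transpose hH),
    nuclearNorm_eq_sum_sqrt_eigenvalues, Finset.mul_sum]
  refine Finset.sum_le_sum fun i _ => ?_
  calc (A *ᵥ Uᵀ i) ⬝ᵥ (B *ᵥ Uᵀ i)
      ≤ √((A *ᵥ Uᵀ i) ⬝ᵥ (A *ᵥ Uᵀ i)) * √((B *ᵥ Uᵀ i) ⬝ᵥ (B *ᵥ Uᵀ i)) :=
        dotProduct_le_sqrt_mul_sqrt _ _
    _ ≤ opNorm A * √(hH.eigenvalues i) := by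
        rw [hB i]
        refine mul_le_mul_of_nonneg_right ?_ (Real.sqrt_nonneg _)
        simpa only [hunit i, Real.sqrt_one, mul_one] using sqrt_dotProduct_mulVec_le A (Uᵀ i)

lemma abs_le_supNorm (A : Matrix (Fin n) (Fin n) ℝ) (i j : Fin n) : |A i j| ≤ supNorm A :=
  calc |A i j| ≤ ⨆ j, |A i j| := le_ciSup (f := fun j => |A i j|) (Set.finite_range _).bddAbove j
    _ ≤ supNorm A := le_ciSup (f := fun i => ⨆ j, |A i j|) (Set.finite_range _).bddAbove i

lemma tinner_le_supNorm_mul_l1 (A B : Matrix (Fin n) (Fin n) ℝ) :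
    tinner A B ≤ supNorm A * l1 B := by
  rw [tinner_eq_sum, l1, Finset.mul_sum]
  refine Finset.sum_le_sum fun i _ => ?_
  rw [Finset.mul_sum]
  refine Finset.sum_le_sum fun j _ => ?_
  calc A i j * B i j ≤ |A i j| * |B i j| := (le_abs_self _).trans (abs_mul _ _).le
    _ ≤ supNorm A * |B i j| := mul_le_mul_of_nonneg_right (abs_le_supNorm A i j) (abs_nonneg _)

lemma frob_vecMulVec (u w : Fin n → ℝ) : frob (vecMulVec u w) = √(u ⬝ᵥ u) * √(w ⬝ᵥ w) := by
  have hsq : ∑ i, ∑ j, vecMulVec u w i j ^ 2 = (u ⬝ᵥ u) * (w ⬝ᵥ w) := by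
    simp only [vecMulVec_apply, dotProduct, Finset.sum_mul_sum]
    exact Finset.sum_congr rfl fun _ _ => Finset.sum_congr rfl fun _ _ => by ring
  have hu : 0 ≤ u ⬝ᵥ u := Finset.sum_nonneg fun i _ => mul_self_nonneg (u i)
  rw [frob, hsq, Real.sqrt_mul hu]

lemma tinner_vecMulVec (A : Matrix (Fin n) (Fin n) ℝ) (u w : Fin n → ℝ) :
    tinner A (vecMulVec u w) = u ⬝ᵥ (A *ᵥ w) := by
  simp only [tinner_eq_sum, vecMulVec_apply, dotProduct, Matrix.mulVec, Finset.mul_sum]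
  exact Finset.sum_congr rfl fun _ _ => Finset.sum_congr rfl fun _ _ => by ring

lemma tinner_vecMulVec_le (A : Matrix (Fin n) (Fin n) ℝ) (u w : Fin n → ℝ) :
    tinner A (vecMulVec u w) ≤ opNorm A * frob (vecMulVec u w) := by
  rw [tinner_vecMulVec, frob_vecMulVec]
  calc u ⬝ᵥ (A *ᵥ w) ≤ √(u ⬝ᵥ u) * √((A *ᵥ w) ⬝ᵥ (A *ᵥ w)) := dotProduct_le_sqrt_mul_sqrt _ _
    _ ≤ √(u ⬝ᵥ u) * (opNorm A * √(w ⬝ᵥ w)) :=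
        mul_le_mul_of_nonneg_left (sqrt_dotProduct_mulVec_le A w) (Real.sqrt_nonneg _)
    _ = opNorm A * (√(u ⬝ᵥ u) * √(w ⬝ᵥ w)) := by ring

lemma smul_onesMat (c : ℝ) :
    c • (onesMat : Matrix (Fin n) (Fin n) ℝ) = vecMulVec (fun _ => c) 1 := by
  ext i j
  simp [onesMat, vecMulVec_apply]

lemma tinner_le_half_penalty {A : Matrix (Fin n) (Fin n) ℝ} {δ γ : ℝ} (hδ : 2 * opNorm A ≤ δ)
    (hγ : 2 * supNorm A ≤ γ) (c : ℝ) (LA LB SM SN : Matrix (Fin n) (Fin n) ℝ) :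
    tinner A (c • onesMat + LA + LB + SM + SN)
      ≤ δ / 2 * (frob (c • (onesMat : Matrix (Fin n) (Fin n) ℝ)) + nuclearNorm LA + nuclearNorm LB)
        + γ / 2 * (l1 SM + l1 SN) := by
  have hop : ∀ B, tinner A B ≤ δ / 2 * nuclearNorm B := fun B =>
    (tinner_le_opNorm_mul_nuclearNorm A B).trans
      (mul_le_mul_of_nonneg_right (by linarith) (nuclearNorm_nonneg B))
  have hsup : ∀ B, tinner A B ≤ γ / 2 * l1 B := fun B =>
    (tinner_le_supNorm_mul_l1 A B).trans (mul_le_mul_of_nonneg_right (by linarith) (l1_nonneg B))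
  have hones :
      tinner A (c • onesMat) ≤ δ / 2 * frob (c • (onesMat : Matrix (Fin n) (Fin n) ℝ)) := by
    rw [smul_onesMat]
    exact (tinner_vecMulVec_le A _ _).trans
      (mul_le_mul_of_nonneg_right (by linarith) (Real.sqrt_nonneg _))
  simp only [tinner_add_right]
  linarith [hop LA, hop LB, hsup SM, hsup SN]

theorem stmt2_general (n : ℕ) (X : Matrix (Fin n) (Fin n) ℝ) (δ γ : ℝ)
    (hδ : 0 < δ) (αs αh : ℝ)
    (Ls Ss Lh Sh ΔLA ΔLB : Matrix (Fin n) (Fin n) ℝ)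
    (M : Finset (Fin n × Fin n)) (k : ℕ)
    (Θs Θh Ps : Matrix (Fin n) (Fin n) ℝ)
    (hΘs : Θs = αs • onesMat + Ls + Ss)
    (hΘh : Θh = αh • onesMat + Lh + Sh)
    -- (i) the basic inequality
    (hbasic : hfun X Θh + δ * nuclearNorm Lh + γ * l1 Sh
        ≤ hfun X Θs + δ * nuclearNorm Ls + γ * l1 Ss)
    -- (ii) the convexity bound
    (hconv : hfun X Θh - hfun X Θs ≥ -(1 / (n : ℝ)) * tinner (X - Ps) (Θh - Θs))
    -- (iii) conditions on the regularization parameters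
    (hδge : δ ≥ 2 * opNorm ((1 / (n : ℝ)) • (X - Ps)))
    (hγge : γ ≥ 2 * supNorm ((1 / (n : ℝ)) • (X - Ps)))
    -- (iv) the decomposition Δ^L = Δ^L_A + Δ^L_B and its bound on Q(L*,S*) − Q(L̂,Ŝ)
    (hdecomp : Lh - Ls = ΔLA + ΔLB)
    (hQ : (nuclearNorm Ls + (γ / δ) * l1 Ss) - (nuclearNorm Lh + (γ / δ) * l1 Sh)
        ≤ (nuclearNorm ΔLA + (γ / δ) * l1 (restrict (Sh - Ss) M))
          - (nuclearNorm ΔLB + (γ / δ) * l1 ((Sh - Ss) - restrict (Sh - Ss) M))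
          + 2 * ∑ j ∈ Finset.univ.filter (fun j : Fin n => k ≤ (j : ℕ)), svDesc Ls j
          + 2 * (γ / δ) * l1 (Ss - restrict Ss M)) :
    nuclearNorm ΔLB + (γ / δ) * l1 ((Sh - Ss) - restrict (Sh - Ss) M)
      ≤ frob ((αh - αs) • (onesMat : Matrix (Fin n) (Fin n) ℝ))
        + 3 * (nuclearNorm ΔLA + (γ / δ) * l1 (restrict (Sh - Ss) M))
        + 4 * ∑ j ∈ Finset.univ.filter (fun j : Fin n => k ≤ (j : ℕ)), svDesc Ls j
        + 4 * (γ / δ) * l1 (Ss - restrict Ss M) := by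
  have hsplit : Θh - Θs = (αh - αs) • onesMat + ΔLA + ΔLB + restrict (Sh - Ss) M
      + ((Sh - Ss) - restrict (Sh - Ss) M) := by
    rw [hΘs, hΘh, eq_add_of_sub_eq hdecomp, sub_smul]
    abel
  have hloss : hfun X Θs - hfun X Θh ≤ tinner ((1 / (n : ℝ)) • (X - Ps)) (Θh - Θs) := by
    rw [tinner_smul_left]
    linarith
  have hdual := tinner_le_half_penalty hδge hγge (αh - αs) ΔLA ΔLB (restrict (Sh - Ss) M)
    ((Sh - Ss) - restrict (Sh - Ss) M)
  rw [← hsplit] at hdual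
  obtain ⟨r, rfl⟩ : ∃ r, γ = δ * r := ⟨γ / δ, (mul_div_cancel₀ γ hδ.ne').symm⟩
  rw [mul_div_cancel_left₀ r hδ.ne'] at hQ ⊢
  have hgap : (nuclearNorm Lh + r * l1 Sh) - (nuclearNorm Ls + r * l1 Ss)
      ≤ (frob ((αh - αs) • (onesMat : Matrix (Fin n) (Fin n) ℝ))
        + (nuclearNorm ΔLA + r * l1 (restrict (Sh - Ss) M))
        + (nuclearNorm ΔLB + r * l1 ((Sh - Ss) - restrict (Sh - Ss) M))) / 2 := by
    refine le_of_mul_le_mul_left ?_ hδ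
    linear_combination hbasic + hloss + hdual
  linarith

/-- Lemma 2: bound on `Q(Δ^L_B, Δ^S_{Mᶜ})`, where
`Q(L,S) = ‖L‖_* + (γ/δ)‖S‖₁`. -/
theorem stmt2 (n : ℕ) (hn : 1 ≤ n) (X : Matrix (Fin n) (Fin n) ℝ) (δ γ : ℝ)
    (hδ : 0 < δ) (hγ : 0 < γ) (αs αh : ℝ)
    (Ls Ss Lh Sh ΔLA ΔLB : Matrix (Fin n) (Fin n) ℝ)
    (M : Finset (Fin n × Fin n)) (k : ℕ) (hk1 : 1 ≤ k) (hkn : k ≤ n)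
    (Θs Θh Ps : Matrix (Fin n) (Fin n) ℝ)
    (hΘs : Θs = αs • onesMat + Ls + Ss)
    (hΘh : Θh = αh • onesMat + Lh + Sh)
    (hPs : Ps = logis Θs)
    -- (i) the basic inequality
    (hbasic : hfun X Θh + δ * nuclearNorm Lh + γ * l1 Sh
        ≤ hfun X Θs + δ * nuclearNorm Ls + γ * l1 Ss)
    -- (ii) the convexity bound
    (hconv : hfun X Θh - hfun X Θs ≥ -(1 / (n : ℝ)) * tinner (X - Ps) (Θh - Θs))
    -- (iii) conditions on the regularization parameters
    (hδge : δ ≥ 2 * opNorm ((1 / (n : ℝ)) • (X - Ps)))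
    (hγge : γ ≥ 2 * supNorm ((1 / (n : ℝ)) • (X - Ps)))
    -- (iv) the decomposition Δ^L = Δ^L_A + Δ^L_B and its bound on Q(L*,S*) − Q(L̂,Ŝ)
    (hdecomp : Lh - Ls = ΔLA + ΔLB)
    (hQ : (nuclearNorm Ls + (γ / δ) * l1 Ss) - (nuclearNorm Lh + (γ / δ) * l1 Sh)
        ≤ (nuclearNorm ΔLA + (γ / δ) * l1 (restrict (Sh - Ss) M))
          - (nuclearNorm ΔLB + (γ / δ) * l1 ((Sh - Ss) - restrict (Sh - Ss) M))
          + 2 * ∑ j ∈ Finset.univ.filter (fun j : Fin n => k ≤ (j : ℕ)), svDesc Ls j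
          + 2 * (γ / δ) * l1 (Ss - restrict Ss M)) :
    nuclearNorm ΔLB + (γ / δ) * l1 ((Sh - Ss) - restrict (Sh - Ss) M)
      ≤ frob ((αh - αs) • (onesMat : Matrix (Fin n) (Fin n) ℝ))
        + 3 * (nuclearNorm ΔLA + (γ / δ) * l1 (restrict (Sh - Ss) M))
        + 4 * ∑ j ∈ Finset.univ.filter (fun j : Fin n => k ≤ (j : ℕ)), svDesc Ls j
        + 4 * (γ / δ) * l1 (Ss - restrict Ss M) :=
  stmt2_general n X δ γ hδ αs αh Ls Ss Lh Sh ΔLA ΔLB M k Θs Θh Ps hΘs hΘh hbasic hconv hδge hγge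
    hdecomp hQ

end CitNet
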